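/- There exists a compact subgroup of the monoid L of linear isometric self-embeddings of ℝ^∞ that is not a Lie group: the group ℤ_p of p-adic integers acts faithfully, continuously and isometrically on ℝ^∞ (identified with ⊕_{n≥1} ℂ(n), where ℤ_p acts on ℂ(n) through ℤ/p^n with a generator acting by multiplication by e^{2πi/p^n}), and its image is a compact subgroup of L isomorphic to ℤ_p, admitting no faithful finite-dimensional subrepresentation. -/

import Mathlib

open scoped RealInnerProductSpace
noncomputable section

/-- `ℝ^∞`: the space of eventually-zero sequences of real numbers. -/
abbrev Rinf : Type := ℕ →₀ ℝ

/-- The inclusion `ℝ^n → ℝ^∞`. -/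
def inclR (n : ℕ) : EuclideanSpace ℝ (Fin n) →ₗ[ℝ] Rinf where
  toFun x := Finsupp.onFinset (Finset.range n)
    (fun m => if h : m < n then x ⟨m, h⟩ else 0)
    (fun m hm => by
      rw [Finset.mem_range]
      by_contra h
      simp [h] at hm)
  map_add' x y := Finsupp.ext fun m => by
    by_cases h : m < n <;> simp [Finsupp.onFinset_apply, h]
  map_smul' c x := Finsupp.ext fun m => by
    by_cases h : m < n <;> simp [Finsupp.onFinset_apply, h]

/-- The weak (colimit) topology on `ℝ^∞` with respect to the subspaces `ℝ^n`. -/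
instance : TopologicalSpace Rinf :=
  ⨆ n, TopologicalSpace.coinduced (inclR n) inferInstance

/-- The inner product on `ℝ^∞`. -/
def rinner (x y : Rinf) : ℝ := ∑' n, x n * y n

/-- A self-map of `ℝ^∞` is a linear isometric embedding if it is additive,
homogeneous and preserves the inner product. -/
def LinIso (f : Rinf → Rinf) : Prop :=
  (∀ a b, f (a + b) = f a + f b) ∧ (∀ (c : ℝ) (a : Rinf), f (c • a) = c • f a) ∧
    ∀ a b, rinner (f a) (f b) = rinner a b

/-- The monoid `L = L(ℝ^∞, ℝ^∞)` of (continuous) linear isometric self-embeddings of `ℝ^∞`,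
topologized as a subspace of the compact-open mapping space. -/
abbrev LMon : Type := {f : C(Rinf, Rinf) // LinIso f}


instance : Monoid LMon where
  one := ⟨ContinuousMap.id _, fun _ _ => rfl, fun _ _ => rfl, fun _ _ => rfl⟩
  mul g f := ⟨g.1.comp f.1,
    fun a b => by
      simp only [ContinuousMap.comp_apply]
      rw [f.2.1, g.2.1],
    fun c a => by
      simp only [ContinuousMap.comp_apply]
      rw [f.2.2.1, g.2.2.1],
    fun a b => by
      simp only [ContinuousMap.comp_apply]
      rw [g.2.2.2, f.2.2.2]⟩
  mul_assoc f g h := Subtype.ext (ContinuousMap.ext fun x => rfl)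
  one_mul f := Subtype.ext (ContinuousMap.ext fun x => rfl)
  mul_one f := Subtype.ext (ContinuousMap.ext fun x => rfl)

/-- A topological monoid admits the structure of a (compact) Lie group if it is isomorphic,
as a topological monoid, to a Lie group (a group with charts in some `ℝ^n` for which
multiplication and inversion are smooth). -/
def AdmitsLieStructure (X : Type) [TopologicalSpace X] [Monoid X] : Prop :=
  ∃ (n : ℕ) (H : Type) (_i1 : TopologicalSpace H)
    (_i2 : ChartedSpace (EuclideanSpace ℝ (Fin n)) H) (_i3 : Group H)
    (_i4 : IsTopologicalGroup H)
    (_i5 : LieGroup (modelWithCornersSelf ℝ (EuclideanSpace ℝ (Fin n))) (⊤ : ℕ∞) H),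
    ∃ e : X ≃ₜ H, ∀ a b : X, e (a * b) = e a * e b


/-! ### Auxiliary: complex exponential helpers -/

def e2 (t : ℝ) : ℂ := Complex.exp ((2 * Real.pi * t : ℝ) * Complex.I)

lemma e2_add (t s : ℝ) : e2 (t + s) = e2 t * e2 s := by
  rw [e2, e2, e2, ← Complex.exp_add]; congr 1; push_cast; ring

lemma e2_int (q : ℤ) : e2 q = 1 := by
  rw [e2]
  have : ((2 * Real.pi * (q:ℝ) : ℝ) : ℂ) * Complex.I = q * (2 * Real.pi * Complex.I) := by
    push_cast; ring
  rw [this, Complex.exp_int_mul_two_pi_mul_I]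

lemma e2_zero : e2 0 = 1 := by simpa using e2_int 0

lemma e2_nat (q : ℕ) : e2 q = 1 := by exact_mod_cast e2_int q

lemma abs_e2 (t : ℝ) : ‖e2 t‖ = 1 := Complex.norm_exp_ofReal_mul_I _

lemma e2_sq (t : ℝ) : (e2 t).re ^ 2 + (e2 t).im ^ 2 = 1 := by
  have : Complex.normSq (e2 t) = 1 := by rw [← Complex.sq_norm, abs_e2]; norm_num
  rw [Complex.normSq_apply] at this; nlinarith [this]

lemma e2_inj {t s : ℝ} (h : e2 t = e2 s) (h1 : |t - s| < 1) : t = s := by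
  rw [e2, e2, Complex.exp_eq_exp_iff_exists_int] at h
  obtain ⟨n, hn⟩ := h
  have hn' : ((2 * Real.pi * t : ℝ) : ℂ) * Complex.I
      = ((2 * Real.pi * s + n * (2 * Real.pi) : ℝ) : ℂ) * Complex.I := by
    rw [hn]; push_cast; ring
  have hr : 2 * Real.pi * t = 2 * Real.pi * s + n * (2 * Real.pi) := by
    exact_mod_cast mul_right_cancel₀ Complex.I_ne_zero hn'
  have hpi : (0:ℝ) < Real.pi := Real.pi_pos
  have ht : t - s = n := by
    have h2 : 2 * Real.pi * (t - s - n) = 0 := by linarith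
    rcases mul_eq_zero.mp h2 with h | h
    · linarith
    · linarith
  have hn0 : n = 0 := by
    have : |(n:ℝ)| < 1 := ht ▸ h1
    rwa [← Int.cast_abs, show (1:ℝ) = ((1:ℤ):ℝ) by norm_num, Int.cast_lt, Int.abs_lt_one_iff] at this
  rw [hn0] at ht; push_cast at ht; linarith

example : True := trivial

variable {p : ℕ} [Fact p.Prime]

def theta (a : ℤ_[p]) (k : ℕ) : ℝ :=
  ((PadicInt.toZModPow (k+1) a).val : ℝ) / ((p ^ (k+1) : ℕ) : ℝ)

def rc (a : ℤ_[p]) (k : ℕ) : ℂ := e2 (theta a k)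

lemma ppow_pos (k : ℕ) : 0 < (p ^ (k+1) : ℕ) :=
  pow_pos (Fact.out (p := p.Prime)).pos _

lemma theta_nonneg (a : ℤ_[p]) (k : ℕ) : 0 ≤ theta a k :=
  div_nonneg (Nat.cast_nonneg _) (Nat.cast_nonneg _)

lemma theta_lt_one (a : ℤ_[p]) (k : ℕ) : theta a k < 1 := by
  rw [theta, div_lt_one (by exact_mod_cast ppow_pos k)]
  exact_mod_cast ZMod.val_lt _

lemma theta_zero_of (a : ℤ_[p]) (k : ℕ) (h : PadicInt.toZModPow (k+1) a = 0) :
    theta a k = 0 := by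
  haveI : NeZero (p ^ (k+1)) := ⟨(ppow_pos k).ne'⟩
  simp [theta, h]

lemma rc_one_of (a : ℤ_[p]) (k : ℕ) (h : PadicInt.toZModPow (k+1) a = 0) :
    rc a k = 1 := by
  rw [rc, theta_zero_of a k h, e2_zero]

lemma rc_zero (k : ℕ) : rc (0 : ℤ_[p]) k = 1 :=
  rc_one_of 0 k (map_zero _)

lemma rc_sq (a : ℤ_[p]) (k : ℕ) : (rc a k).re ^ 2 + (rc a k).im ^ 2 = 1 := e2_sq _

lemma rc_add (a b : ℤ_[p]) (k : ℕ) : rc (a + b) k = rc a k * rc b k := by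
  haveI : NeZero (p ^ (k+1)) := ⟨(ppow_pos k).ne'⟩
  rw [rc, rc, rc, ← e2_add]
  set x := PadicInt.toZModPow (k+1) a with hx
  set y := PadicInt.toZModPow (k+1) b with hy
  have hab : (PadicInt.toZModPow (k+1) (a+b)) = x + y := map_add _ _ _
  set q : ℕ := (x.val + y.val) / (p ^ (k+1)) with hq
  have hval : x.val + y.val = (x + y).val + (p ^ (k+1)) * q := by
    rw [ZMod.val_add, hq, Nat.mod_add_div]
  have hθ : theta a k + theta b k = theta (a+b) k + q := by
    rw [theta, theta, theta, hab, ← hx, ← hy, ← add_div, ← Nat.cast_add, hval]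
    have hne : ((p ^ (k+1) : ℕ) : ℝ) ≠ 0 := by exact_mod_cast (ppow_pos k).ne'
    have hne' : ((p:ℝ)) ^ (k+1) ≠ 0 := by push_cast at hne; exact hne
    push_cast [Nat.cast_add, Nat.cast_mul]
    rw [add_div, mul_comm, mul_div_assoc, div_self hne', mul_one]
  rw [hθ, e2_add, e2_nat, mul_one]

lemma rc_eq_of_agree {a b : ℤ_[p]} {N k : ℕ} (hk : k + 1 ≤ N)
    (h : PadicInt.toZModPow N a = PadicInt.toZModPow N b) : rc a k = rc b k := by
  have ha : PadicInt.toZModPow (k+1) a = PadicInt.toZModPow (k+1) b := by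
    rw [← PadicInt.cast_toZModPow (k+1) N hk a, ← PadicInt.cast_toZModPow (k+1) N hk b, h]
  rw [rc, rc, theta, theta, ha]

lemma rc_inj {a b : ℤ_[p]} {k : ℕ} (h : rc a k = rc b k) :
    PadicInt.toZModPow (k+1) a = PadicInt.toZModPow (k+1) b := by
  haveI : NeZero (p ^ (k+1)) := ⟨(ppow_pos k).ne'⟩
  have := e2_inj h (by
    rw [abs_lt]
    constructor
    · nlinarith [theta_lt_one b k, theta_nonneg a k]
    · nlinarith [theta_lt_one a k, theta_nonneg b k])
  have hval : (PadicInt.toZModPow (k+1) a).val = (PadicInt.toZModPow (k+1) b).val := by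
    have hne : ((p ^ (k+1) : ℕ) : ℝ) ≠ 0 := by exact_mod_cast (ppow_pos k).ne'
    rw [theta, theta, div_eq_div_iff hne hne] at this
    have := mul_right_cancel₀ hne this
    exact_mod_cast this
  exact ZMod.val_injective _ hval

/-! ### The rotation action of `ℤ_[p]` on `Rinf` -/

variable {p : ℕ} [Fact p.Prime]

/-- The `k`-th complex "plane" coordinate of `x`. -/
def pl (x : Rinf) (k : ℕ) : ℂ := ⟨x (2*k), x (2*k+1)⟩

lemma pl_re (x : Rinf) (k : ℕ) : (pl x k).re = x (2*k) := rfl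
lemma pl_im (x : Rinf) (k : ℕ) : (pl x k).im = x (2*k+1) := rfl

lemma pl_add (x y : Rinf) (k : ℕ) : pl (x + y) k = pl x k + pl y k := by
  apply Complex.ext <;> simp [pl]

lemma pl_smul (c : ℝ) (x : Rinf) (k : ℕ) : pl (c • x) k = (c : ℂ) * pl x k := by
  apply Complex.ext <;> simp [pl]

/-- The `m`-th coordinate of the rotation of `x` by `a`. -/
def rotCoord (a : ℤ_[p]) (x : Rinf) (m : ℕ) : ℝ :=
  if m % 2 = 0 then (rc a (m/2) * pl x (m/2)).re else (rc a (m/2) * pl x (m/2)).im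

lemma rotCoord_eq_zero (a : ℤ_[p]) (x : Rinf) (m : ℕ)
    (h0 : x (2*(m/2)) = 0) (h1 : x (2*(m/2)+1) = 0) : rotCoord a x m = 0 := by
  have hpl : pl x (m/2) = 0 := by apply Complex.ext <;> simp [pl, h0, h1]
  rw [rotCoord, hpl, mul_zero]
  split <;> simp

/-- The rotation of `x : Rinf` by `a : ℤ_[p]`. -/
def rot (a : ℤ_[p]) (x : Rinf) : Rinf :=
  Finsupp.onFinset
    (x.support.image (fun j => 2*(j/2)) ∪ x.support.image (fun j => 2*(j/2)+1))
    (rotCoord a x)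
    (fun m hm => by
      have h0 : x (2*(m/2)) ≠ 0 ∨ x (2*(m/2)+1) ≠ 0 := by
        by_contra hz
        push_neg at hz
        exact hm (rotCoord_eq_zero a x m hz.1 hz.2)
      have hmem : m = 2*(m/2) ∨ m = 2*(m/2)+1 := by omega
      rcases h0 with h | h
      · have hj : (2*(m/2)) ∈ x.support := Finsupp.mem_support_iff.mpr h
        rcases hmem with hm' | hm'
        · refine Finset.mem_union_left _ (Finset.mem_image.mpr ⟨2*(m/2), hj, ?_⟩); omega
        · refine Finset.mem_union_right _ (Finset.mem_image.mpr ⟨2*(m/2), hj, ?_⟩); omega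
      · have hj : (2*(m/2)+1) ∈ x.support := Finsupp.mem_support_iff.mpr h
        rcases hmem with hm' | hm'
        · refine Finset.mem_union_left _ (Finset.mem_image.mpr ⟨2*(m/2)+1, hj, ?_⟩); omega
        · refine Finset.mem_union_right _ (Finset.mem_image.mpr ⟨2*(m/2)+1, hj, ?_⟩); omega)

lemma rot_apply (a : ℤ_[p]) (x : Rinf) (m : ℕ) : rot a x m = rotCoord a x m := rfl

lemma rot_even (a : ℤ_[p]) (x : Rinf) (k : ℕ) :
    rot a x (2*k) = (rc a k * pl x k).re := by
  rw [rot_apply, rotCoord]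
  simp [Nat.mul_div_cancel_left, Nat.mul_mod_right]

lemma rot_odd (a : ℤ_[p]) (x : Rinf) (k : ℕ) :
    rot a x (2*k+1) = (rc a k * pl x k).im := by
  rw [rot_apply, rotCoord]
  have h1 : (2*k+1) % 2 = 1 := by omega
  have h2 : (2*k+1) / 2 = k := by omega
  simp [h1, h2]

lemma pl_rot (a : ℤ_[p]) (x : Rinf) (k : ℕ) :
    pl (rot a x) k = rc a k * pl x k := by
  apply Complex.ext
  · rw [pl_re, rot_even]
  · rw [pl_im, rot_odd]

lemma rot_add (a : ℤ_[p]) (x y : Rinf) : rot a (x + y) = rot a x + rot a y := by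
  apply Finsupp.ext
  intro m
  rw [Finsupp.add_apply, rot_apply, rot_apply, rot_apply, rotCoord, rotCoord, rotCoord,
    pl_add, mul_add]
  split <;> simp

lemma rot_smul (a : ℤ_[p]) (c : ℝ) (x : Rinf) : rot a (c • x) = c • rot a x := by
  apply Finsupp.ext
  intro m
  rw [Finsupp.smul_apply, rot_apply, rot_apply, rotCoord, rotCoord, pl_smul]
  rw [show rc a (m/2) * ((c:ℂ) * pl x (m/2)) = (c:ℂ) * (rc a (m/2) * pl x (m/2)) by ring]
  split <;> simp [smul_eq_mul, rot_apply, rotCoord]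

lemma rot_rot (a b : ℤ_[p]) (x : Rinf) : rot a (rot b x) = rot (a + b) x := by
  apply Finsupp.ext
  intro m
  rw [rot_apply, rot_apply, rotCoord, rotCoord, pl_rot, rc_add, ← mul_assoc]

lemma rot_zero (x : Rinf) : rot (0 : ℤ_[p]) x = x := by
  apply Finsupp.ext
  intro m
  rw [rot_apply, rotCoord, rc_zero, one_mul]
  have hmem : m = 2*(m/2) ∨ m = 2*(m/2)+1 := by omega
  split_ifs with h
  · rw [pl_re]
    congr 1
    omega
  · rw [pl_im]
    congr 1
    omega

/-! ### Support bounds and the inner product -/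

lemma exists_bound (x : Rinf) : ∃ N : ℕ, ∀ m, N ≤ m → x m = 0 := by
  refine ⟨(x.support.sup id) + 1, fun m hm => ?_⟩
  by_contra h
  have hmem : m ∈ x.support := Finsupp.mem_support_iff.mpr h
  have := Finset.le_sup (f := id) hmem
  simp only [id] at this
  omega

lemma rot_bound (a : ℤ_[p]) (x : Rinf) (N : ℕ) (h : ∀ m, N ≤ m → x m = 0) :
    ∀ m, 2*N ≤ m → rot a x m = 0 := by
  intro m hm
  rw [rot_apply]
  apply rotCoord_eq_zero
  · exact h _ (by omega)
  · exact h _ (by omega)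

lemma rinner_eq_sum (x y : Rinf) (N : ℕ) (hx : ∀ m, N ≤ m → x m = 0) :
    rinner x y = ∑ m ∈ Finset.range N, x m * y m := by
  rw [rinner]
  apply tsum_eq_sum
  intro m hm
  rw [hx m (by simpa using hm), zero_mul]

lemma sum_range_two_mul (f : ℕ → ℝ) (M : ℕ) :
    ∑ m ∈ Finset.range (2*M), f m = ∑ k ∈ Finset.range M, (f (2*k) + f (2*k+1)) := by
  induction M with
  | zero => simp
  | succ M ih =>
      rw [Finset.sum_range_succ, ← ih, show 2*(M+1) = (2*M+1)+1 by ring,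
        Finset.sum_range_succ, Finset.sum_range_succ]
      ring

lemma pair_identity (u z w : ℂ) (hu : u.re^2 + u.im^2 = 1) :
    (u*z).re*(u*w).re + (u*z).im*(u*w).im = z.re*w.re + z.im*w.im := by
  simp only [Complex.mul_re, Complex.mul_im]
  linear_combination (z.re*w.re + z.im*w.im) * hu

lemma rinner_rot (a : ℤ_[p]) (x y : Rinf) : rinner (rot a x) (rot a y) = rinner x y := by
  obtain ⟨N₁, h₁⟩ := exists_bound x
  obtain ⟨N₂, h₂⟩ := exists_bound y
  set N := max N₁ N₂ with hN
  have hx : ∀ m, N ≤ m → x m = 0 := fun m hm => h₁ m (le_trans (le_max_left _ _) hm)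
  have hy : ∀ m, N ≤ m → y m = 0 := fun m hm => h₂ m (le_trans (le_max_right _ _) hm)
  have hx2 : ∀ m, 2*N ≤ m → x m = 0 := fun m hm => hx m (by omega)
  have hy2 : ∀ m, 2*N ≤ m → y m = 0 := fun m hm => hy m (by omega)
  rw [rinner_eq_sum _ _ (2*N) (rot_bound a x N hx), rinner_eq_sum _ _ (2*N) hx2,
    sum_range_two_mul, sum_range_two_mul]
  apply Finset.sum_congr rfl
  intro k _
  rw [rot_even, rot_odd, rot_even, rot_odd]
  rw [show x (2*k) = (pl x k).re from rfl, show x (2*k+1) = (pl x k).im from rfl,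
    show y (2*k) = (pl y k).re from rfl, show y (2*k+1) = (pl y k).im from rfl]
  exact pair_identity _ _ _ (rc_sq a k)

lemma linIso_rot (a : ℤ_[p]) : LinIso (rot a) :=
  ⟨rot_add a, rot_smul a, rinner_rot a⟩

/-! ### Continuity of the rotation and of the inclusions -/

lemma inclR_apply (n : ℕ) (x : EuclideanSpace ℝ (Fin n)) (m : ℕ) :
    inclR n x m = if h : m < n then x ⟨m, h⟩ else 0 := rfl

lemma inclR_bound (n : ℕ) (x : EuclideanSpace ℝ (Fin n)) (m : ℕ) (h : n ≤ m) :
    inclR n x m = 0 := by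
  rw [inclR_apply, dif_neg (by omega)]

lemma continuous_inclR (n : ℕ) : Continuous (inclR n : EuclideanSpace ℝ (Fin n) → Rinf) := by
  have h1 : @Continuous _ _ _ (TopologicalSpace.coinduced (inclR n) inferInstance) (inclR n) :=
    continuous_coinduced_rng
  exact continuous_le_rng (le_iSup (fun k => TopologicalSpace.coinduced (inclR k)
    inferInstance) n) h1

lemma continuous_rinf_dom {Y : Type*} [tY : TopologicalSpace Y] {f : Rinf → Y}
    (h : ∀ n, Continuous (f ∘ (inclR n))) : Continuous f := by
  have : @Continuous _ _ (⨆ n, TopologicalSpace.coinduced (inclR n) inferInstance) tY f :=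
    continuous_iSup_dom.mpr fun n => continuous_coinduced_dom.mpr (h n)
  exact this

variable {p : ℕ} [Fact p.Prime]

lemma continuous_coord_inclR (n m : ℕ) :
    Continuous fun x : EuclideanSpace ℝ (Fin n) => inclR n x m := by
  simp only [inclR_apply]
  by_cases h : m < n
  · simp only [dif_pos h]
    exact (EuclideanSpace.proj (⟨m, h⟩ : Fin n)).continuous
  · simp only [dif_neg h]
    exact continuous_const

lemma continuous_rotCoord_inclR (a : ℤ_[p]) (n j : ℕ) :
    Continuous fun x : EuclideanSpace ℝ (Fin n) => rotCoord a (inclR n x) j := by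
  simp only [rotCoord]
  by_cases hj : j % 2 = 0
  · simp only [if_pos hj, Complex.mul_re, pl_re, pl_im]
    exact ((continuous_const.mul (continuous_coord_inclR n (2*(j/2)))).sub
      (continuous_const.mul (continuous_coord_inclR n (2*(j/2)+1))))
  · simp only [if_neg hj, Complex.mul_im, pl_re, pl_im]
    exact ((continuous_const.mul (continuous_coord_inclR n (2*(j/2)+1))).add
      (continuous_const.mul (continuous_coord_inclR n (2*(j/2)))))

/-- The finite-dimensional restriction of the rotation. -/
def gmap (a : ℤ_[p]) (n : ℕ) (x : EuclideanSpace ℝ (Fin n)) : EuclideanSpace ℝ (Fin (2*n)) :=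
  (WithLp.equiv 2 (Fin (2*n) → ℝ)).symm (fun j => rotCoord a (inclR n x) j)

lemma continuous_gmap (a : ℤ_[p]) (n : ℕ) : Continuous (gmap a n) := by
  apply Continuous.comp
  · exact (PiLp.continuousLinearEquiv 2 ℝ (fun _ : Fin (2*n) => ℝ)).symm.continuous
  · exact continuous_pi fun j => continuous_rotCoord_inclR a n j

lemma rot_inclR (a : ℤ_[p]) (n : ℕ) (x : EuclideanSpace ℝ (Fin n)) :
    rot a (inclR n x) = inclR (2*n) (gmap a n x) := by
  apply Finsupp.ext
  intro m
  rw [rot_apply, inclR_apply]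
  by_cases h : m < 2*n
  · rw [dif_pos h]
    show rotCoord a (inclR n x) m = (WithLp.equiv 2 (Fin (2*n) → ℝ)).symm _ _
    rfl
  · rw [dif_neg h]
    apply rotCoord_eq_zero
    · exact inclR_bound n x _ (by omega)
    · exact inclR_bound n x _ (by omega)

lemma continuous_rot (a : ℤ_[p]) : Continuous (rot a) := by
  apply continuous_rinf_dom
  intro n
  have : (rot a) ∘ (inclR n) = (inclR (2*n)) ∘ (gmap a n) := by
    funext x
    exact rot_inclR a n x
  rw [this]
  exact (continuous_inclR (2*n)).comp (continuous_gmap a n)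

/-! ### Topology of `Rinf`: compact sets lie in a finite stage -/

lemma isClosed_of_finite_preimages (S : Set Rinf)
    (h : ∀ n, Set.Finite ((inclR n) ⁻¹' S)) : IsClosed S := by
  rw [← isOpen_compl_iff]
  have : @IsOpen _ (⨆ n, TopologicalSpace.coinduced (inclR n) inferInstance) Sᶜ :=
    isOpen_iSup_iff.mpr fun n => by
      rw [isOpen_coinduced, Set.preimage_compl]
      exact (h n).isClosed.isOpen_compl
  exact this

lemma inclR_injective (n : ℕ) : Function.Injective (inclR n) := by
  intro x y hxy
  apply PiLp.ext; intro i
  have := congrArg (fun z : Rinf => z i.1) hxy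
  simpa [inclR_apply, i.2] using this

lemma compact_subset_stage {K : Set Rinf} (hK : IsCompact K) :
    ∃ N, ∀ x ∈ K, ∀ m, N ≤ m → x m = 0 := by
  by_contra hcon
  push_neg at hcon
  choose xs hxsK ms hms hne using hcon
  set S : Set Rinf := Set.range xs with hS
  have hfin : ∀ T ⊆ S, ∀ k, Set.Finite ((inclR k) ⁻¹' T) := by
    intro T hT k
    have hsub : (inclR k) ⁻¹' T ⊆ (inclR k) ⁻¹' (xs '' (Set.Iio k)) := by
      intro y hy
      obtain ⟨n, hn⟩ := hT hy
      have hnk : n < k := by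
        by_contra hnk
        push_neg at hnk
        have : xs n (ms n) = 0 := by
          rw [hn]
          exact inclR_bound k y _ (le_trans hnk (hms n))
        exact hne n this
      exact ⟨n, hnk, hn⟩
    refine Set.Finite.subset (Set.Finite.preimage ?_ ((Set.finite_Iio k).image xs)) hsub
    exact Function.Injective.injOn (inclR_injective k)
  have hSsub : S ⊆ K := by
    rintro _ ⟨n, rfl⟩
    exact hxsK n
  have hSclosed : IsClosed S := isClosed_of_finite_preimages S (hfin S le_rfl)
  have hScpt : IsCompact S := IsCompact.of_isClosed_subset hK hSclosed hSsub
  have hdisc : DiscreteTopology S := by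
    rw [discreteTopology_iff_forall_isClosed]
    intro s
    have : IsClosed ((Subtype.val '' s : Set Rinf)) := by
      apply isClosed_of_finite_preimages
      exact hfin _ (by rintro _ ⟨⟨z, hz⟩, _, rfl⟩; exact hz)
    have hpre : Subtype.val ⁻¹' (Subtype.val '' s : Set Rinf) = s :=
      Set.preimage_image_eq s Subtype.val_injective
    rw [← hpre]
    exact this.preimage continuous_subtype_val
  have hSfin : S.Finite := hScpt.finite ⟨hdisc⟩
  set M : ℕ := (hSfin.toFinset.sup fun x => x.support.sup id) + 1 with hM
  have hbound : ∀ x ∈ S, ∀ m, M ≤ m → x m = 0 := by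
    intro x hx m hm
    by_contra h
    have hmem : m ∈ x.support := Finsupp.mem_support_iff.mpr h
    have h1 : x.support.sup id ≤ hSfin.toFinset.sup (fun x => x.support.sup id) :=
      Finset.le_sup (f := fun x : Rinf => x.support.sup id) (hSfin.mem_toFinset.mpr hx)
    have h2 := Finset.le_sup (f := id) hmem
    simp only [id] at h2
    omega
  exact hne M (hbound (xs M) ⟨M, rfl⟩ (ms M) (hms M))

/-! ### Facts about `ℤ_[p]` -/

variable {p : ℕ} [Fact p.Prime]

lemma isOpen_toZModPow_fiber (n : ℕ) (c : ZMod (p^n)) :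
    IsOpen {x : ℤ_[p] | PadicInt.toZModPow n x = c} := by
  have hp : (0:ℝ) < (p:ℝ) := by exact_mod_cast (Fact.out : p.Prime).pos
  rw [Metric.isOpen_iff]
  intro x hx
  refine ⟨(p:ℝ)^(-(n:ℤ)), zpow_pos hp _, fun y hy => ?_⟩
  have hnorm : ‖y - x‖ ≤ (p:ℝ)^(-(n:ℤ)) := by
    rw [Metric.mem_ball, dist_eq_norm] at hy
    exact le_of_lt hy
  have hker : y - x ∈ Ideal.span {(p : ℤ_[p]) ^ n} :=
    (PadicInt.norm_le_pow_iff_mem_span_pow _ n).mp hnorm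
  rw [← PadicInt.ker_toZModPow, RingHom.mem_ker, map_sub, sub_eq_zero] at hker
  rw [Set.mem_setOf_eq, hker]
  exact hx

lemma singleton_not_open (z : ℤ_[p]) : ¬ IsOpen ({z} : Set ℤ_[p]) := by
  intro h
  rw [Metric.isOpen_iff] at h
  obtain ⟨ε, hε, hball⟩ := h z rfl
  have hp1 : (1:ℝ)/p < 1 := by
    rw [div_lt_one (by exact_mod_cast (Fact.out : p.Prime).pos)]
    exact_mod_cast (Fact.out : p.Prime).one_lt
  obtain ⟨k, hk⟩ := exists_pow_lt_of_lt_one hε hp1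
  have hmem : z + (p:ℤ_[p])^k ∈ Metric.ball z ε := by
    rw [Metric.mem_ball, dist_eq_norm, add_sub_cancel_left, PadicInt.norm_p_pow]
    calc (p:ℝ)^(-(k:ℤ)) = ((1:ℝ)/p)^k := by
          rw [zpow_neg, one_div, inv_pow]
          norm_num
      _ < ε := hk
  have := hball hmem
  rw [Set.mem_singleton_iff] at this
  have hpk : ((p:ℤ_[p]))^k ≠ 0 :=
    pow_ne_zero _ (Nat.cast_ne_zero (R := ℤ_[p]).mpr (Fact.out : p.Prime).ne_zero)
  exact hpk (add_eq_left.mp this)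

lemma rot_eq_of_agree {a b : ℤ_[p]} (N : ℕ) (h : PadicInt.toZModPow N a = PadicInt.toZModPow N b)
    (x : Rinf) (hx : ∀ m, 2*N ≤ m → x m = 0) : rot a x = rot b x := by
  apply Finsupp.ext
  intro m
  rw [rot_apply, rot_apply]
  by_cases hk : m/2 + 1 ≤ N
  · rw [rotCoord, rotCoord, rc_eq_of_agree hk h]
  · have e1 : x (2*(m/2)) = 0 := hx _ (by omega)
    have e2 : x (2*(m/2)+1) = 0 := hx _ (by omega)
    have h0 : pl x (m/2) = 0 :=
      Complex.ext (by rw [pl_re, e1, Complex.zero_re]) (by rw [pl_im, e2, Complex.zero_im])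
    rw [rotCoord, rotCoord, h0, mul_zero, mul_zero]

/-! ### `ℤ_[p]` is not a Lie group -/

lemma padic_not_lie : ¬ AdmitsLieStructure (Multiplicative ℤ_[p]) := by
  rintro ⟨n, H, i1, i2, i3, i4, i5, e, -⟩
  set h₀ := e (Multiplicative.ofAdd (0:ℤ_[p])) with hh₀
  set φ := chartAt (EuclideanSpace ℝ (Fin n)) h₀ with hφ
  rcases Nat.eq_zero_or_pos n with hn | hn
  · subst hn
    haveI : Subsingleton (EuclideanSpace ℝ (Fin 0)) := ⟨fun a b => PiLp.ext fun i => i.elim0⟩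
    have hsub : φ.source ⊆ {h₀} := by
      intro s hs
      have h1 : φ s = φ h₀ := Subsingleton.elim _ _
      exact Set.mem_singleton_iff.mpr (φ.injOn hs (mem_chart_source _ _) h1)
    have hsrc : φ.source = {h₀} :=
      le_antisymm hsub (Set.singleton_subset_iff.mpr (mem_chart_source _ _))
    have hopen : IsOpen ({h₀} : Set H) := hsrc ▸ φ.open_source
    have hpre : (fun x : ℤ_[p] => e (Multiplicative.ofAdd x)) ⁻¹' {h₀} = {(0:ℤ_[p])} := by
      ext x
      simp only [Set.mem_preimage, Set.mem_singleton_iff, hh₀]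
      constructor
      · intro hx
        exact Multiplicative.ofAdd.injective (e.injective hx)
      · rintro rfl; rfl
    have : IsOpen ({(0:ℤ_[p])} : Set ℤ_[p]) := by
      rw [← hpre]
      exact hopen.preimage (e.continuous.comp continuous_ofAdd)
    exact singleton_not_open 0 this
  · have htgt : φ h₀ ∈ φ.target := φ.map_source (mem_chart_source _ _)
    obtain ⟨ε, hε, hball⟩ := Metric.isOpen_iff.mp φ.open_target _ htgt
    set v := EuclideanSpace.single (⟨0, hn⟩ : Fin n) (ε/2) with hv'
    have hv : ‖v‖ = ε/2 := by
      rw [hv', EuclideanSpace.norm_single]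
      exact abs_of_pos (by linarith)
    have hmem2 : φ h₀ + v ∈ Metric.ball (φ h₀) ε := by
      rw [Metric.mem_ball, dist_eq_norm, add_sub_cancel_left, hv]
      linarith
    set ψ : EuclideanSpace ℝ (Fin n) → ℤ_[p] :=
      fun y => Multiplicative.toAdd (e.symm (φ.symm y)) with hψ
    have hψcont : ContinuousOn ψ φ.target :=
      (continuous_toAdd.comp e.symm.continuous).comp_continuousOn φ.continuousOn_symm
    have hconn : IsPreconnected (ψ '' Metric.ball (φ h₀) ε) :=
      ((convex_ball _ _).isPreconnected).image ψ (hψcont.mono hball)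
    have hsing : (ψ '' Metric.ball (φ h₀) ε).Subsingleton := hconn.subsingleton
    have h1 : ψ (φ h₀) = ψ (φ h₀ + v) :=
      hsing (Set.mem_image_of_mem _ (Metric.mem_ball_self hε)) (Set.mem_image_of_mem _ hmem2)
    have h2 : e.symm (φ.symm (φ h₀)) = e.symm (φ.symm (φ h₀ + v)) :=
      Multiplicative.toAdd.injective h1
    have h3 : φ.symm (φ h₀) = φ.symm (φ h₀ + v) := e.symm.injective h2
    have hinj : φ h₀ = φ h₀ + v := φ.symm.injOn htgt (hball hmem2) h3
    have hv0 : v = 0 := by rwa [left_eq_add] at hinj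
    rw [hv0, norm_zero] at hv
    linarith

/-! ### The representation `ρ` and the main theorem's ingredients -/

/-- The representation of `ℤ_[p]` in `LMon`. -/
def rho (a : ℤ_[p]) : LMon := ⟨⟨rot a, continuous_rot a⟩, linIso_rot a⟩

lemma rho_apply (a : ℤ_[p]) (x : Rinf) : (rho a).1 x = rot a x := rfl

lemma rho_zero : rho (0 : ℤ_[p]) = 1 :=
  Subtype.ext (ContinuousMap.ext fun x => rot_zero x)

lemma rho_add (a b : ℤ_[p]) : rho (a + b) = rho a * rho b :=
  Subtype.ext (ContinuousMap.ext fun x => (rot_rot a b x).symm)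

lemma rho_eq_one_iff {c : ℤ_[p]} (hc : rho c = 1) : c = 0 := by
  have hrot : ∀ x, rot c x = x := fun x =>
    congrFun (congrArg (fun f : LMon => (f.1 : Rinf → Rinf)) hc) x
  apply PadicInt.ext_of_toZModPow.mp
  intro n
  match n with
  | 0 =>
    haveI : Subsingleton (ZMod (p ^ 0)) := by rw [pow_zero p]; exact inferInstance
    exact Subsingleton.elim _ _
  | (k+1) =>
    set x : Rinf := Finsupp.single (2*k) 1 with hx
    have hplx : pl x k = 1 := by
      apply Complex.ext
      · rw [pl_re, hx, Finsupp.single_eq_same, Complex.one_re]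
      · rw [pl_im, hx, Finsupp.single_eq_of_ne (by omega), Complex.one_im]
    have hre : (rc c k).re = 1 := by
      have := congrArg (fun z : Rinf => z (2*k)) (hrot x)
      rw [rot_even, hplx, mul_one, hx, Finsupp.single_eq_same] at this
      exact this
    have him : (rc c k).im = 0 := by
      have := congrArg (fun z : Rinf => z (2*k+1)) (hrot x)
      rw [rot_odd, hplx, mul_one, hx, Finsupp.single_eq_of_ne (by omega)] at this
      exact this
    have hrc : rc c k = rc (0:ℤ_[p]) k := by
      rw [rc_zero]
      exact Complex.ext (by rw [hre, Complex.one_re]) (by rw [him, Complex.one_im])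
    have := rc_inj hrc
    rw [map_zero] at this
    rw [this, map_zero]

lemma rho_injective : Function.Injective (rho (p := p)) := by
  intro a b hab
  have h1 : rho (a-b) * rho b = rho b := by
    rw [← rho_add, sub_add_cancel, hab]
  have h2 : rho (a-b) = 1 := by
    calc rho (a-b) = rho (a-b) * 1 := (mul_one _).symm
      _ = rho (a-b) * (rho b * rho (-b)) := by rw [← rho_add, add_neg_cancel, rho_zero]
      _ = (rho (a-b) * rho b) * rho (-b) := (mul_assoc _ _ _).symm
      _ = rho b * rho (-b) := by rw [h1]
      _ = 1 := by rw [← rho_add, add_neg_cancel, rho_zero]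
  exact sub_eq_zero.mp (rho_eq_one_iff h2)

lemma rho_continuous : Continuous (rho (p := p)) := by
  apply Continuous.subtype_mk
  rw [ContinuousMap.continuous_compactOpen]
  intro K hK U hU
  obtain ⟨N, hN⟩ := compact_subset_stage hK
  rw [isOpen_iff_forall_mem_open]
  intro a₀ ha₀
  refine ⟨{b : ℤ_[p] | PadicInt.toZModPow N b = PadicInt.toZModPow N a₀}, ?_, 
    isOpen_toZModPow_fiber N _, rfl⟩
  intro b hb
  simp only [Set.mem_setOf_eq] at hb ha₀ ⊢
  intro x hx
  have : rot b x = rot a₀ x :=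
    rot_eq_of_agree N hb x (fun m hm => hN x hx m (by omega))
  show rot b x ∈ U
  rw [this]
  exact ha₀ hx
/-- There exists a compact subgroup of the monoid `L` of linear isometric
self-embeddings of `ℝ^∞` that is not a Lie group: for every prime `p`, the group `ℤ_p` of
`p`-adic integers acts faithfully, continuously and isometrically on `ℝ^∞`; its image is a
compact subgroup of `L` isomorphic to `ℤ_p`; it admits no faithful finite-dimensional
subrepresentation, and `ℤ_p` is not a Lie group. -/
theorem exists_compact_nonLie_subgroup (p : ℕ) [Fact p.Prime] :
    ∃ ρ : ℤ_[p] → LMon,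
      ρ 0 = 1 ∧
      (∀ a b : ℤ_[p], ρ (a + b) = ρ a * ρ b) ∧
      Continuous ρ ∧
      Function.Injective ρ ∧
      IsCompact (Set.range ρ) ∧
      (¬ ∃ U : Submodule ℝ Rinf, FiniteDimensional ℝ U ∧
          (∀ a : ℤ_[p], ∀ x ∈ U, (ρ a).1 x ∈ U) ∧
          ∀ a : ℤ_[p], (∀ x ∈ U, (ρ a).1 x = x) → a = 0) ∧
      ¬ AdmitsLieStructure (Multiplicative ℤ_[p]) := by
  refine ⟨rho, rho_zero, rho_add, rho_continuous, rho_injective,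
    isCompact_range rho_continuous, ?_, padic_not_lie⟩
  rintro ⟨U, hfd, hinv, hfaith⟩
  obtain ⟨t, ht⟩ := (Submodule.fg_iff_finiteDimensional U).mpr hfd
  set N : ℕ := (t.sup fun x => x.support.sup id) + 1 with hNdef
  have hstage : ∀ x ∈ U, ∀ m, N ≤ m → x m = 0 := by
    intro x hxU m hm
    have hle : U ≤ Finsupp.supported ℝ ℝ (Set.Iio N) := by
      rw [← ht, Submodule.span_le]
      intro g hg
      rw [SetLike.mem_coe, Finsupp.mem_supported]
      intro j hj
      have h1 : g.support.sup id ≤ t.sup (fun x : Rinf => x.support.sup id) :=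
        Finset.le_sup (f := fun x : Rinf => x.support.sup id) (Finset.mem_coe.mp hg)
      have h2 := Finset.le_sup (f := id) hj
      simp only [id] at h2
      exact Set.mem_Iio.mpr (by omega)
    have hsupp := hle hxU
    rw [Finsupp.mem_supported] at hsupp
    by_contra h
    have := hsupp (Finsupp.mem_support_iff.mpr h)
    rw [Set.mem_Iio] at this
    omega
  have hagree : PadicInt.toZModPow N ((p:ℤ_[p])^N) = PadicInt.toZModPow N (0:ℤ_[p]) := by
    rw [map_zero, map_pow]
    have hcast : (PadicInt.toZModPow (p := p) N) (p:ℤ_[p]) = ((p:ℕ) : ZMod (p^N)) := by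
      rw [show ((p:ℤ_[p])) = ((p:ℕ):ℤ_[p]) by norm_cast, map_natCast]
    rw [hcast, ← Nat.cast_pow, ZMod.natCast_self]
  have hfix : ∀ x ∈ U, (rho ((p:ℤ_[p])^N)).1 x = x := by
    intro x hxU
    rw [rho_apply, rot_eq_of_agree N hagree x (fun m hm => hstage x hxU m (by omega)), rot_zero]
  have hcontr := hfaith _ hfix
  exact pow_ne_zero N (Nat.cast_ne_zero (R := ℤ_[p]).mpr (Fact.out : p.Prime).ne_zero) hcontr

end
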